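/- Let x̂ₙ minimize the regularized SAA objective x ↦ (1/n)∑ᵢ F(x,ξ̂ᵢ) + ε·R(x) with value Ĵ = (1/n)∑ᵢ F(x̂ₙ,ξ̂ᵢ) + ε·R(x̂ₙ). On the event that F(x̂ₙ,·)_#𝔓 lies in the W₁-ball of radius ε(R(x̂ₙ)+α₀) around F(x̂ₙ,·)_#𝔓̂ₙ, it holds that 𝔼_{ξ∼𝔓}[F(x̂ₙ,ξ)] ≤ Ĵ + εα₀. In particular, if that event has probability greater than 1−β, then ℙⁿ(𝔼_{ξ∼𝔓}[F(x̂ₙ,ξ)] ≤ Ĵ + εα₀) > 1−β. -/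

import Mathlib

/-!
Kantorovich–Rubinstein with the `1`-Lipschitz identity: if `F(x̂,·)_#𝔓` is within `W₁`-distance
`r = ε(R(x̂)+α₀)` of `F(x̂,·)_#𝔓̂ₙ`, their means differ by at most `r`. The mean of the empirical
push-forward is `(1/n)∑ᵢ F(x̂,ξ̂ᵢ)`, so `𝔼_𝔓[F(x̂,ξ)] ≤ Ĵ - εR(x̂) + r = Ĵ + εα₀`. The probabilistic
statement follows by monotonicity of `ℙⁿ`.
-/

open MeasureTheory ENNReal Finset

/-- Optimal transport cost between two measures (1-Wasserstein when the cost is a metric). -/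
noncomputable def Wcost {E : Type*} [MeasurableSpace E] (c : E → E → ℝ)
    (μ ν : Measure E) : ℝ≥0∞ :=
  ⨅ (π : Measure (E × E)) (_ : π.map Prod.fst = μ) (_ : π.map Prod.snd = ν),
    ∫⁻ z, ENNReal.ofReal (c z.1 z.2) ∂π

/-- The empirical measure of a finite sample. -/
noncomputable def empMeasure {E : Type*} [MeasurableSpace E] {n : ℕ}
    (ξ : Fin n → E) : Measure E :=
  ((n : ℝ≥0∞))⁻¹ • ∑ i, Measure.dirac (ξ i)

theorem edist_integral_id_le_Wcost {μ ν : Measure ℝ} (hμ : Integrable id μ)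
    (hν : Integrable id ν) :
    edist (∫ y, y ∂μ) (∫ y, y ∂ν) ≤ Wcost (fun a b => |a - b|) μ ν := by
  refine le_iInf fun π => le_iInf fun hπμ => le_iInf fun hπν => ?_
  subst hπμ hπν
  have hfst : Integrable Prod.fst π :=
    (integrable_map_measure aestronglyMeasurable_id measurable_fst.aemeasurable).1 hμ
  have hsnd : Integrable Prod.snd π :=
    (integrable_map_measure aestronglyMeasurable_id measurable_snd.aemeasurable).1 hν
  rw [integral_map measurable_fst.aemeasurable (f := fun y : ℝ => y) aestronglyMeasurable_id,
    integral_map measurable_snd.aemeasurable (f := fun y : ℝ => y) aestronglyMeasurable_id]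
  simpa only [edist_dist, Real.dist_eq] using edist_integral_le_lintegral_edist hfst hsnd

theorem integral_le_integral_add_of_Wcost_map_le {E : Type*} [MeasurableSpace E]
    {μ ν : Measure E} {f : E → ℝ} (hf : Measurable f) (hμ : Integrable f μ)
    (hν : Integrable f ν) {r : ℝ} (hr : 0 ≤ r)
    (h : Wcost (fun a b => |a - b|) (μ.map f) (ν.map f) ≤ ENNReal.ofReal r) :
    ∫ x, f x ∂μ ≤ ∫ x, f x ∂ν + r := by
  have hμf : Integrable id (μ.map f) :=
    (integrable_map_measure aestronglyMeasurable_id hf.aemeasurable).2 hμ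
  have hνf : Integrable id (ν.map f) :=
    (integrable_map_measure aestronglyMeasurable_id hf.aemeasurable).2 hν
  have hdist := (edist_integral_id_le_Wcost hμf hνf).trans h
  rw [integral_map hf.aemeasurable (f := fun y : ℝ => y) aestronglyMeasurable_id,
    integral_map hf.aemeasurable (f := fun y : ℝ => y) aestronglyMeasurable_id,
    edist_le_ofReal hr, Real.dist_eq] at hdist
  linarith [le_abs_self (∫ x, f x ∂μ - ∫ x, f x ∂ν)]

section Empirical

variable {E : Type*} [MeasurableSpace E] {n : ℕ}

theorem integrable_empMeasure (ξ : Fin n → E) {f : E → ℝ} (hf : StronglyMeasurable f) :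
    Integrable f (empMeasure ξ) := by
  rcases n.eq_zero_or_pos with rfl | hn
  · simp [empMeasure]
  · exact (integrable_finsetSum_measure.2 fun i _ => integrable_dirac' hf enorm_lt_top)
      |>.smul_measure (by simp [hn.ne'])

-- For `n = 0` both sides are junk zeros: `empMeasure ξ = ∞ • 0 = 0` and `x / 0 = 0`.
theorem integral_empMeasure (ξ : Fin n → E) {f : E → ℝ} (hf : StronglyMeasurable f) :
    ∫ x, f x ∂(empMeasure ξ) = (∑ i, f (ξ i)) / n := by
  rw [empMeasure, integral_smul_measure,
    integral_finsetSum_measure fun i _ => integrable_dirac' hf enorm_lt_top]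
  simp only [integral_dirac' f _ hf, toReal_inv, toReal_natCast, smul_eq_mul]
  ring

end Empirical

theorem finite_sample_guarantee_general
    {Ω E X : Type*} [MeasurableSpace Ω] [MeasurableSpace E] {n : ℕ}
    (ℙn : Measure Ω) (F : X → E → ℝ) (hFmeas : ∀ x, Measurable (F x))
    (P : Measure E)
    (ξhat : Ω → Fin n → E) (xhat : Ω → X)
    (R : X → ℝ) (hR : ∀ x, 0 ≤ R x) (ε α₀ : ℝ) (hε : 0 < ε) (hα₀ : 0 ≤ α₀)
    (hint : ∀ ω, Integrable (F (xhat ω)) P)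
    (Jhat : Ω → ℝ)
    (hJ : ∀ ω, Jhat ω = (∑ i, F (xhat ω) (ξhat ω i)) / n + ε * R (xhat ω)) :
    (∀ ω : Ω,
      Wcost (fun a b : ℝ => |a - b|) (P.map (F (xhat ω)))
          ((empMeasure (ξhat ω)).map (F (xhat ω))) ≤
        ENNReal.ofReal (ε * (R (xhat ω) + α₀)) →
      ∫ ξ, F (xhat ω) ξ ∂P ≤ Jhat ω + ε * α₀) ∧
    (∀ β : ℝ,
      ℙn {ω | Wcost (fun a b : ℝ => |a - b|) (P.map (F (xhat ω)))
          ((empMeasure (ξhat ω)).map (F (xhat ω))) ≤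
        ENNReal.ofReal (ε * (R (xhat ω) + α₀))} > ENNReal.ofReal (1 - β) →
      ℙn {ω | ∫ ξ, F (xhat ω) ξ ∂P ≤ Jhat ω + ε * α₀} > ENNReal.ofReal (1 - β)) := by
  refine (fun guarantee => ⟨guarantee, fun β hβ =>
    hβ.trans_le (measure_mono fun ω => guarantee ω)⟩) fun ω hball => ?_
  have hFm := hFmeas (xhat ω)
  have hradius : 0 ≤ ε * (R (xhat ω) + α₀) := by nlinarith [hR (xhat ω)]
  have hmean := integral_le_integral_add_of_Wcost_map_le hFm (hint ω)
    (integrable_empMeasure _ hFm.stronglyMeasurable) hradius hball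
  rw [integral_empMeasure _ hFm.stronglyMeasurable] at hmean
  rw [hJ ω]
  linarith

/-- Finite sample guarantee: if `x̂ₙ` minimizes the regularized SAA objective with value
`Ĵ`, then on the event that `F(x̂ₙ,·)_#𝔓` lies in the `W₁`-ball of radius
`ε(R(x̂ₙ)+α₀)` around `F(x̂ₙ,·)_#𝔓̂ₙ`, the out-of-sample cost satisfies
`𝔼_𝔓[F(x̂ₙ,ξ)] ≤ Ĵ + εα₀`; hence if that event has probability greater than `1−β`, so
does the performance guarantee. -/
theorem finite_sample_guarantee
    {Ω E X : Type*} [MeasurableSpace Ω] [MeasurableSpace E] {n : ℕ} (hn : 0 < n)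
    (ℙn : Measure Ω) (𝒳 : Set X) (F : X → E → ℝ) (hFmeas : ∀ x, Measurable (F x))
    (P : Measure E) [IsProbabilityMeasure P]
    (ξhat : Ω → Fin n → E) (xhat : Ω → X) (hx𝒳 : ∀ ω, xhat ω ∈ 𝒳)
    (R : X → ℝ) (hR : ∀ x, 0 ≤ R x) (ε α₀ : ℝ) (hε : 0 < ε) (hα₀ : 0 ≤ α₀)
    (hint : ∀ ω, Integrable (F (xhat ω)) P)
    (hmin : ∀ ω, ∀ x ∈ 𝒳,
      (∑ i, F (xhat ω) (ξhat ω i)) / n + ε * R (xhat ω) ≤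
        (∑ i, F x (ξhat ω i)) / n + ε * R x)
    (Jhat : Ω → ℝ)
    (hJ : ∀ ω, Jhat ω = (∑ i, F (xhat ω) (ξhat ω i)) / n + ε * R (xhat ω)) :
    (∀ ω : Ω,
      Wcost (fun a b : ℝ => |a - b|) (P.map (F (xhat ω)))
          ((empMeasure (ξhat ω)).map (F (xhat ω))) ≤
        ENNReal.ofReal (ε * (R (xhat ω) + α₀)) →
      ∫ ξ, F (xhat ω) ξ ∂P ≤ Jhat ω + ε * α₀) ∧
    (∀ β : ℝ,
      ℙn {ω | Wcost (fun a b : ℝ => |a - b|) (P.map (F (xhat ω)))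
          ((empMeasure (ξhat ω)).map (F (xhat ω))) ≤
        ENNReal.ofReal (ε * (R (xhat ω) + α₀))} > ENNReal.ofReal (1 - β) →
      ℙn {ω | ∫ ξ, F (xhat ω) ξ ∂P ≤ Jhat ω + ε * α₀} > ENNReal.ofReal (1 - β)) :=
  finite_sample_guarantee_general ℙn F hFmeas P ξhat xhat R hR ε α₀ hε hα₀ hint Jhat hJ
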